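/- arXiv:0908.1666 — 4 statements merged into one kernel-verified Lean document; each statement's English description precedes it below -/
import Mathlib

section
/- Let 𝒜 be a hereditary abelian category and λ : K₀(𝒜) → ℤ a ℤ-linear form. The full subcategory 𝒜(λ) of objects X with λ([X]) = 0 and λ([X']) ≤ 0 for all subobjects X' ⊆ X is closed under kernels: if f : X → Y is a morphism between objects of 𝒜(λ), then Ker(f) ∈ 𝒜(λ). -/
open CategoryTheory CategoryTheory.Limits

/-!
The sequence `0 → ker f → X → coim f → 0` is short exact and `coim f` embeds in `Y`, so
`0 = λ X = λ (ker f) + λ (coim f)` is a sum of two nonpositive terms; hence `λ (ker f) = 0`.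
Subobjects of `ker f` are subobjects of `X`, so they have nonpositive `λ`.
-/

namespace CategoryTheory.Abelian

variable {C : Type*} [Category C] [Abelian C]

lemma shortExact_kernel_ι_coimage_π {X Y : C} (f : X ⟶ Y) :
    (ShortComplex.mk (kernel.ι f) (Abelian.coimage.π f) (cokernel.condition _)).ShortExact :=
  { exact := ShortComplex.exact_cokernel (kernel.ι f) }

lemma eq_kernel_add_coimage_of_additive (lam : C → ℤ)
    (hadd : ∀ T : ShortComplex C, T.ShortExact → lam T.X₂ = lam T.X₁ + lam T.X₃)
    {X Y : C} (f : X ⟶ Y) :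
    lam X = lam (kernel f) + lam (Abelian.coimage f) :=
  hadd _ (shortExact_kernel_ι_coimage_π f)

end CategoryTheory.Abelian

/-- Let `𝒜` be a hereditary abelian category and `λ : K₀(𝒜) → ℤ` a linear form,
i.e. a function `lam` on objects additive on short exact sequences.  The subcategory `𝒜(λ)`
of objects `X` with `lam X = 0` and `lam X' ≤ 0` for all subobjects `X' ⊆ X` is closed under
kernels: for a morphism `f : X ⟶ Y` with `X, Y ∈ 𝒜(λ)`, the kernel of `f` again lies
in `𝒜(λ)`. -/
theorem controlled_subcategory_closed_under_kernels
    {C : Type*} [Category C] [Abelian C] (lam : C → ℤ)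
    (hadd : ∀ T : ShortComplex C, T.ShortExact → lam T.X₂ = lam T.X₁ + lam T.X₃)
    (X Y : C) (f : X ⟶ Y)
    (hX : lam X = 0 ∧ ∀ (Z : C) (g : Z ⟶ X), Mono g → lam Z ≤ 0)
    (hY : lam Y = 0 ∧ ∀ (Z : C) (g : Z ⟶ Y), Mono g → lam Z ≤ 0) :
    lam (kernel f) = 0 ∧ ∀ (Z : C) (g : Z ⟶ kernel f), Mono g → lam Z ≤ 0 := by
  have hsub : ∀ (Z : C) (g : Z ⟶ kernel f), Mono g → lam Z ≤ 0 :=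
    fun Z g _ => hX.2 Z (g ≫ kernel.ι f) inferInstance
  have hker : lam (kernel f) ≤ 0 := hsub _ (𝟙 _) inferInstance
  have hcoim : lam (Abelian.coimage f) ≤ 0 := hY.2 _ (Abelian.factorThruCoimage f) inferInstance
  have hsum := Abelian.eq_kernel_add_coimage_of_additive lam hadd f
  exact ⟨by linarith [hX.1], hsub⟩
end

section
/- Let 𝒜 be an abelian category and λ : K₀(𝒜) → ℤ a ℤ-linear form. The full subcategory 𝒜(λ) = {X : λ(X) = 0 and λ(X') ≤ 0 for all subobjects X' ⊆ X} is closed under extensions: if 0 → X → E → Y → 0 is exact with X, Y ∈ 𝒜(λ), then E ∈ 𝒜(λ). -/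
open CategoryTheory CategoryTheory.Limits

/-- Let `𝒜` be an abelian category and `λ : K₀(𝒜) → ℤ` a linear form, i.e. a
function `lam` on objects additive on short exact sequences.  The subcategory
`𝒜(λ) = {X : lam X = 0 and lam X' ≤ 0 for all subobjects X' ⊆ X}` is closed under
extensions: if `0 → X → E → Y → 0` is exact with `X, Y ∈ 𝒜(λ)` then `E ∈ 𝒜(λ)`. -/
theorem controlled_subcategory_closed_under_extensions
    {C : Type*} [Category C] [Abelian C] (lam : C → ℤ)
    (hadd : ∀ T : ShortComplex C, T.ShortExact → lam T.X₂ = lam T.X₁ + lam T.X₃)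
    (T : ShortComplex C) (hT : T.ShortExact)
    (hX : lam T.X₁ = 0 ∧ ∀ (Z : C) (g : Z ⟶ T.X₁), Mono g → lam Z ≤ 0)
    (hY : lam T.X₃ = 0 ∧ ∀ (Z : C) (g : Z ⟶ T.X₃), Mono g → lam Z ≤ 0) :
    lam T.X₂ = 0 ∧ ∀ (Z : C) (g : Z ⟶ T.X₂), Mono g → lam Z ≤ 0 := by
  constructor
  · rw [hadd T hT, hX.1, hY.1]; ring
  · intro Z g hg
    have := hg
    set φ : Z ⟶ T.X₃ := g ≫ T.g with hφ
    -- short exact sequence kernel φ → Z → image φ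
    let S : ShortComplex C := ShortComplex.mk (kernel.ι φ) (factorThruImage φ)
      (by rw [← cancel_mono (image.ι φ), Category.assoc, image.fac, zero_comp,
            kernel.condition])
    have hSexact : S.Exact := by
      let ψ : S ⟶ ShortComplex.mk (kernel.ι φ) φ (kernel.condition φ) :=
        { τ₁ := 𝟙 _
          τ₂ := 𝟙 _
          τ₃ := image.ι φ
          comm₁₂ := by simp [S]
          comm₂₃ := by simp [S] }
      have : Epi ψ.τ₁ := by dsimp [ψ]; infer_instance
      have : IsIso ψ.τ₂ := by dsimp [ψ]; infer_instance
      have : Mono ψ.τ₃ := by dsimp [ψ]; infer_instance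
      exact (ShortComplex.exact_iff_of_epi_of_isIso_of_mono ψ).2
        (ShortComplex.exact_kernel φ)
    have hSse : S.ShortExact := by
      refine ⟨hSexact⟩
    have hadd' := hadd S hSse
    -- kernel φ maps monomorphically into X₁
    have hcond : (kernel.ι φ ≫ g) ≫ T.g = 0 := by
      rw [Category.assoc, ← hφ, kernel.condition]
    let k : kernel φ ⟶ T.X₁ :=
      hT.fIsKernel.lift (KernelFork.ofι (kernel.ι φ ≫ g) hcond)
    have hk : k ≫ T.f = kernel.ι φ ≫ g :=
      hT.fIsKernel.fac (KernelFork.ofι (kernel.ι φ ≫ g) hcond) WalkingParallelPair.zero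
    have hkmono : Mono k := by
      have : Mono (k ≫ T.f) := by rw [hk]; exact mono_comp _ _
      exact mono_of_mono k T.f
    have h1 : lam (kernel φ) ≤ 0 := hX.2 _ k hkmono
    have h2 : lam (image φ) ≤ 0 := hY.2 _ (image.ι φ) inferInstance
    have : lam Z = lam (kernel φ) + lam (image φ) := hadd'
    omega
end

section
/- Let H⁺ be a Hopf algebra with a Hopf pairing ψ : H⁺ × H⁺ → ℂ satisfying ψ(a, bb') = ψ(Δ(a), b⊗b'), which is positive definite on each graded piece. Suppose x_i, x_j are homogeneous primitive elements of degrees θ_i, θ_j with Δ(x_l) = x_l⊗1 + K_{θ_l}⊗x_l, normalized so ψ(x_i,x_i) = ψ(x_j,x_j) = 1, ψ(x_i,x_j) = 0 for i ≠ j, and ψ(K_{θ_i}, K_{θ_j}) = v^{(θ_i,θ_j)} with v > 1. Then ψ(x_i x_j, x_i x_j) = 1 and ψ(x_i x_j, x_j x_i) = v^{(θ_i,θ_j)}, and positive definiteness of ψ forces (θ_i, θ_j) ≤ 0. -/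
open TensorProduct

/-- Let `H⁺` be an ℕI-graded Hopf algebra with a symmetric Hopf pairing `ψ`
satisfying `ψ(a, bb') = ψ(Δ a, b ⊗ b')` and `ψ(aa', b) = ψ(a ⊗ a', Δ b)` (the pairing on
tensors being the product `ψ ⊗ ψ`), which is positive (semi)definite.  Suppose `x_i, x_j`
are homogeneous primitive elements of degrees `θ_i, θ_j`, `Δ(x_l) = x_l⊗1 + K_l⊗x_l`,
normalized with `ψ(x_i,x_i) = ψ(x_j,x_j) = 1`, `ψ(x_i,x_j) = 0` (`i ≠ j`), orthogonal to the
grouplikes and to `1`, and `ψ(K_i,K_j) = v^{(θ_i,θ_j)}` with `v > 1`, `ψ(K,1) = 1`.  Then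
`ψ(x_i x_j, x_i x_j) = 1`, `ψ(x_i x_j, x_j x_i) = v^{(θ_i,θ_j)}`, and positivity forces
`(θ_i, θ_j) ≤ 0`. -/
theorem hopf_pairing_forces_nonpositive_form
    {H : Type*} [Ring H] [Algebra ℝ H]
    (ψ : H →ₗ[ℝ] H →ₗ[ℝ] ℝ)
    (comul : H →ₗ[ℝ] H ⊗[ℝ] H)
    (hcomul_mul : ∀ a b : H, comul (a * b) = comul a * comul b)
    (xi xj Ki Kj : H) (v t : ℝ) (hv : 1 < v)
    (hΔxi : comul xi = xi ⊗ₜ[ℝ] (1 : H) + Ki ⊗ₜ[ℝ] xi)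
    (hΔxj : comul xj = xj ⊗ₜ[ℝ] (1 : H) + Kj ⊗ₜ[ℝ] xj)
    (hmul_right : ∀ a b b' : H, ψ a (b * b') = (LinearMap.BilinForm.tmul ψ ψ) (comul a) (b ⊗ₜ[ℝ] b'))
    (hmul_left : ∀ a a' b : H, ψ (a * a') b = (LinearMap.BilinForm.tmul ψ ψ) (a ⊗ₜ[ℝ] a') (comul b))
    (hsymm : ∀ a b : H, ψ a b = ψ b a)
    (hpos : ∀ z : H, 0 ≤ ψ z z)
    (hxixi : ψ xi xi = 1) (hxjxj : ψ xj xj = 1)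
    (hxixj : ψ xi xj = 0)
    (hKiKj : ψ Ki Kj = v ^ t)
    (hKi1 : ψ Ki (1 : H) = 1) (hKj1 : ψ Kj (1 : H) = 1)
    (hxi1 : ψ xi (1 : H) = 0) (hxj1 : ψ xj (1 : H) = 0)
    (hxiKi : ψ xi Ki = 0) (hxiKj : ψ xi Kj = 0)
    (hxjKi : ψ xj Ki = 0) (hxjKj : ψ xj Kj = 0) :
    ψ (xi * xj) (xi * xj) = 1 ∧ ψ (xi * xj) (xj * xi) = v ^ t ∧ t ≤ 0 := by
  have h1Kj : ψ (1 : H) Kj = 1 := by rw [hsymm]; exact hKj1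
  have h1Ki : ψ (1 : H) Ki = 1 := by rw [hsymm]; exact hKi1
  have h1xi : ψ (1 : H) xi = 0 := by rw [hsymm]; exact hxi1
  have h1xj : ψ (1 : H) xj = 0 := by rw [hsymm]; exact hxj1
  have hxjxi : ψ xj xi = 0 := by rw [hsymm]; exact hxixj
  have hKjKi : ψ Kj Ki = v ^ t := by rw [hsymm]; exact hKiKj
  -- expansion lemmas for ψ xₗ (a*b)
  have ei : ∀ a b : H, ψ xi (a * b) = ψ xi a * ψ (1 : H) b + ψ Ki a * ψ xi b := by
    intro a b
    rw [hmul_right, hΔxi, map_add, LinearMap.add_apply,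
      LinearMap.BilinForm.tensorDistrib_tmul, LinearMap.BilinForm.tensorDistrib_tmul]
    simp [mul_comm]
  have ej : ∀ a b : H, ψ xj (a * b) = ψ xj a * ψ (1 : H) b + ψ Kj a * ψ xj b := by
    intro a b
    rw [hmul_right, hΔxj, map_add, LinearMap.add_apply,
      LinearMap.BilinForm.tensorDistrib_tmul, LinearMap.BilinForm.tensorDistrib_tmul]
    simp [mul_comm]
  -- main expansion for ψ (xi*xj) (a*b)
  have eij : ∀ a b : H, ψ (xi * xj) (a * b)
      = ψ (xi * xj) a * ψ (1 : H) b + ψ (xi * Kj) a * ψ xj b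
        + ψ (Ki * xj) a * ψ xi b + ψ (Ki * Kj) a * ψ (xi * xj) b := by
    intro a b
    rw [hmul_right, hcomul_mul, hΔxi, hΔxj]
    rw [add_mul, mul_add, mul_add]
    simp only [Algebra.TensorProduct.tmul_mul_tmul, map_add, LinearMap.add_apply,
      LinearMap.BilinForm.tensorDistrib_tmul, one_mul, mul_one, smul_eq_mul]
    ring
  have eji : ∀ a b : H, ψ (xj * xi) (a * b)
      = ψ (xj * xi) a * ψ (1 : H) b + ψ (xj * Ki) a * ψ xi b
        + ψ (Kj * xi) a * ψ xj b + ψ (Kj * Ki) a * ψ (xj * xi) b := by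
    intro a b
    rw [hmul_right, hcomul_mul, hΔxj, hΔxi]
    rw [add_mul, mul_add, mul_add]
    simp only [Algebra.TensorProduct.tmul_mul_tmul, map_add, LinearMap.add_apply,
      LinearMap.BilinForm.tensorDistrib_tmul, one_mul, mul_one, smul_eq_mul]
    ring
  -- values of ψ xₗ on products
  have hxiKiKj : ψ xi (Ki * Kj) = 0 := by rw [ei, hxiKi, hxiKj]; ring
  have hxjKjKi : ψ xj (Kj * Ki) = 0 := by rw [ej, hxjKj, hxjKi]; ring
  have hxixiKj : ψ xi (xi * Kj) = 1 := by rw [ei, hxixi, h1Kj, hxiKj]; ring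
  have hxjxjKi : ψ xj (xj * Ki) = 1 := by rw [ej, hxjxj, h1Ki, hxjKi]; ring
  have hxjxiKj : ψ xj (xi * Kj) = 0 := by rw [ej, hxjxi, hxjKj]; ring
  have hxixjKi : ψ xi (xj * Ki) = 0 := by rw [ei, hxixj, hxiKi]; ring
  have hxiKixj : ψ xi (Ki * xj) = 0 := by rw [ei, hxiKi, hxixj]; ring
  have hxjKjxi : ψ xj (Kj * xi) = 0 := by rw [ej, hxjKj, hxjxi]; ring
  have hxjKixj : ψ xj (Ki * xj) = v ^ t := by rw [ej, hxjKi, hKjKi, hxjxj]; ring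
  have hxiKjxi : ψ xi (Kj * xi) = v ^ t := by rw [ei, hxiKj, hKiKj, hxixi]; ring
  have hxixixj : ψ xi (xi * xj) = 0 := by rw [ei, hxixj, h1xj]; rw [hsymm Ki xi, hxiKi]; ring
  have hxjxixj : ψ xj (xi * xj) = 0 := by rw [ej, hxjxi, h1xj]; rw [hsymm Kj xi, hxiKj]; ring
  have hxixjxi : ψ xi (xj * xi) = 0 := by rw [ei, hxixj, h1xi]; rw [hsymm Ki xj, hxjKi]; ring
  have hxjxjxi : ψ xj (xj * xi) = 0 := by rw [ej, hxjxj, h1xi]; rw [hsymm Kj xj, hxjKj]; ring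
  -- ψ(xi xj, xi xj) = 1
  have main1 : ψ (xi * xj) (xi * xj) = 1 := by
    rw [eij]
    rw [hsymm (xi * xj) xi, hxixixj]
    rw [hsymm (xi * Kj) xi, hxixiKj]
    rw [hsymm (Ki * xj) xi, hxiKixj]
    rw [hsymm (Ki * Kj) xi, hxiKiKj]
    rw [hxjxj]
    ring
  -- ψ(xi xj, xj xi) = v ^ t
  have main2 : ψ (xi * xj) (xj * xi) = v ^ t := by
    rw [eij]
    rw [hsymm (xi * xj) xj, hxjxixj]
    rw [hsymm (xi * Kj) xj, hxjxiKj]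
    rw [hsymm (Ki * xj) xj, hxjKixj]
    rw [hsymm (Ki * Kj) xj]
    rw [ej, hxjKi, hKjKi, hsymm (xi * xj) xi, hxixixj]
    rw [hxixi]
    ring
  -- ψ(xj xi, xj xi) = 1
  have main3 : ψ (xj * xi) (xj * xi) = 1 := by
    rw [eji]
    rw [hsymm (xj * xi) xj, hxjxjxi]
    rw [hsymm (xj * Ki) xj, hxjxjKi]
    rw [hsymm (Kj * xi) xj, hxjKjxi]
    rw [hsymm (Kj * Ki) xj, hxjKjKi]
    rw [hxixi]
    ring
  have main4 : ψ (xj * xi) (xi * xj) = v ^ t := by rw [hsymm, main2]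
  -- positivity of ψ(z,z) with z = xi*xj - xj*xi gives v^t ≤ 1
  have hz := hpos (xi * xj - xj * xi)
  simp only [map_sub, LinearMap.sub_apply, main1, main2, main3, main4] at hz
  have hvt : v ^ t ≤ 1 := by linarith
  have ht : t ≤ 0 := by
    have h2 : v ^ t ≤ v ^ (0 : ℝ) := by rwa [Real.rpow_zero]
    exact (Real.rpow_le_rpow_left_iff hv).mp h2
  exact ⟨main1, main2, ht⟩
end

section
/- Let ω be the involution of the double Ringel-Hall algebra 𝒟(𝒜) with ω(u_α⁺) = u_α⁻, ω(u_α⁻) = u_α⁺, ω(K_μ) = K_{−μ}. Then ω is a coalgebra anti-morphism: Δ ∘ ω = (ω ⊗ ω) ∘ Δ^{op}, and the pairing satisfies φ(x,y) = φ(ω(y), ω(x)) for x ∈ ℋ⁺(𝒜), y ∈ ℋ⁻(𝒜). -/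
open TensorProduct

/-- Let `ω` be the involution of the double Ringel-Hall algebra with
`ω(u_α⁺ K_μ) = u_α⁻ K_{−μ}` and `ω(u_α⁻ K_μ) = u_α⁺ K_{−μ}`.  With the Ringel-Hall
comultiplications `Δ⁺(u_γ⁺) = Σ_{(α,β)} c_γ(α,β) · u_α⁺ K_{dim β} ⊗ u_β⁺` and
`Δ⁻(u_γ⁻) = Σ_{(α,β)} c_γ(α,β) · u_β⁻ ⊗ u_α⁻ K_{−dim β}` (where
`c_γ(α,β) = v^{⟨α,β⟩} (a_α a_β / a_γ) g^γ_{αβ}`), `ω` is a coalgebra anti-morphism: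
`Δ⁻ ∘ ω = (ω ⊗ ω) ∘ Δ^{op}` on the generators `u_γ⁺`; and the skew-Hopf pairing
`φ(u_α⁺ K_μ, u_β⁻ K_ν) = v^{−(μ,ν)−(α,ν)+(μ,β)} δ_{αβ}/a_α` satisfies
`φ(x,y) = φ(ω y, ω x)`. -/
theorem hall_involution_coalgebra_antimorphism_and_pairing
    {P G : Type*} [AddCommGroup G] [DecidableEq P]
    {Hp Hm : Type*} [AddCommGroup Hp] [Module ℂ Hp] [AddCommGroup Hm] [Module ℂ Hm]
    (upK : P → G → Hp) (umK : P → G → Hm)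
    (Δp : Hp →ₗ[ℂ] Hp ⊗[ℂ] Hp) (Δm : Hm →ₗ[ℂ] Hm ⊗[ℂ] Hm)
    (ωp : Hp →ₗ[ℂ] Hm) (ωm : Hm →ₗ[ℂ] Hp)
    (hωp : ∀ (α : P) (μ : G), ωp (upK α μ) = umK α (-μ))
    (hωm : ∀ (α : P) (μ : G), ωm (umK α μ) = upK α (-μ))
    (F : P → Finset (P × P)) (co : P → P → P → ℂ) (dimv : P → G)
    (hΔp : ∀ γ : P, Δp (upK γ 0)
      = ∑ x ∈ F γ, co γ x.1 x.2 • (upK x.1 (dimv x.2) ⊗ₜ[ℂ] upK x.2 0))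
    (hΔm : ∀ γ : P, Δm (umK γ 0)
      = ∑ x ∈ F γ, co γ x.1 x.2 • (umK x.2 0 ⊗ₜ[ℂ] umK x.1 (-(dimv x.2))))
    (φ : Hp →ₗ[ℂ] Hm →ₗ[ℂ] ℂ)
    (v : ℂ) (a : P → ℂ) (sym : G → G → ℤ)
    (hsym : ∀ μ ν, sym μ ν = sym ν μ)
    (hsymadd : ∀ μ ν ν', sym μ (ν + ν') = sym μ ν + sym μ ν')
    (hφ : ∀ (α β : P) (μ ν : G), φ (upK α μ) (umK β ν)
      = if α = β then v ^ (-(sym μ ν) - sym (dimv α) ν + sym μ (dimv β)) / a α else 0) :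
    (∀ γ : P, Δm (ωp (upK γ 0))
      = (TensorProduct.map ωp ωp) ((TensorProduct.comm ℂ Hp Hp) (Δp (upK γ 0)))) ∧
    (∀ (α β : P) (μ ν : G),
      φ (upK α μ) (umK β ν) = φ (ωm (umK β ν)) (ωp (upK α μ))) := by
  have hzero : ∀ μ : G, sym μ 0 = 0 := by
    intro μ
    have := hsymadd μ 0 0
    simpa using this.symm
  have hneg : ∀ μ ν : G, sym μ (-ν) = -sym μ ν := by
    intro μ ν
    have := hsymadd μ ν (-ν)
    rw [add_neg_cancel, hzero] at this
    omega
  constructor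
  · intro γ
    rw [hωp, neg_zero, hΔm, hΔp, map_sum, map_sum]
    refine Finset.sum_congr rfl fun x _ => ?_
    rw [LinearEquiv.map_smul, LinearMap.map_smul]
    simp [hωp, neg_zero]
  · intro α β μ ν
    rw [hωm, hωp, hφ, hφ]
    by_cases h : α = β
    · subst h
      simp only [if_pos rfl]
      have hnegl : ∀ μ ν : G, sym (-μ) ν = -sym μ ν := by
        intro μ ν; rw [hsym, hneg, hsym]
      congr 2
      simp only [hneg, hnegl, hsym ν μ, hsym (dimv α) μ, hsym (dimv α) ν]
      congr 1
      ring
    · rw [if_neg h, if_neg (fun hh => h hh.symm)]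
end
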